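/- Let H be a Hilbert space and suppose e₁, …, e_n are zero-mean H-valued random elements, each expressed as eᵢ = ∑_k √λ_k e_{i,k} ψ_k with ∑_k λ_k < ∞, with the cross-moment structure E(e_{i₁,k₁} e_{i₂,k₂}) = δ_{i₁}^{i₂} δ_{k₁}^{k₂}. Let m ∈ ℝⁿ and let D : Hⁿ → H be a bounded linear operator such that D applied to any vector of the form (m₁ h, …, m_n h), h ∈ H, is zero. Then D(e₁, …, e_n) and ∑ᵢ mᵢ eᵢ are orthogonal in L²(Ω; H): E⟨D(e₁,…,e_n), ∑ᵢ mᵢ eᵢ⟩_H = 0. -/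

import Mathlib

open RealInnerProductSpace MeasureTheory Filter
open scoped ENNReal Topology

/-! Expand each `eᵢ` along the orthonormal family `e_{i,k}`. For the partial sums `S_N`,
orthonormality collapses `E⟨D S_N, ∑ᵢ mᵢ S_{N,i}⟩` to `∑_{k<N} ⟨D (m₁ φ_k, …, m_n φ_k), φ_k⟩`
with `φ_k = √λ_k ψ_k`, and every term vanishes because `D` kills such vectors. Both sides of the
inner product depend continuously on `(e₁, …, e_n)` in `L²(Ω; H)`, so the identity passes to
the limit. -/

section Development

variable {Ω : Type*} [MeasurableSpace Ω] {μ : Measure Ω}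

namespace ContinuousLinearMap

variable {𝕜 ι E F : Type*} [NontriviallyNormedField 𝕜] [Fintype ι] [DecidableEq ι]
  [NormedAddCommGroup E] [NormedSpace 𝕜 E] [NormedAddCommGroup F] [NormedSpace 𝕜 F]
  {p : ℝ≥0∞} [Fact (1 ≤ p)]

noncomputable def piCompLpL (A : (ι → E) →L[𝕜] F) (p : ℝ≥0∞) [Fact (1 ≤ p)] (μ : Measure Ω) :
    (ι → Lp E p μ) →L[𝕜] Lp F p μ :=
  ∑ i, (A.comp (single 𝕜 (fun _ => E) i)).compLpL p μ ∘L proj i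

theorem coeFn_piCompLpL (A : (ι → E) →L[𝕜] F) (x : ι → Lp E p μ) :
    A.piCompLpL p μ x =ᵐ[μ] fun ω => A (fun i => x i ω) := by
  have hterm : ∀ i, (A.comp (single 𝕜 (fun _ => E) i)).compLpL p μ (x i) =ᵐ[μ]
      fun ω => A.comp (single 𝕜 (fun _ => E) i) (x i ω) := fun i => coeFn_compLpL _ _
  filter_upwards [Lp.coeFn_fun_finsetSum Finset.univ
    (fun i => (A.comp (single 𝕜 (fun _ => E) i)).compLpL p μ (x i)),
    eventually_all.2 hterm] with ω hsum hterms
  simp only [piCompLpL, sum_apply, comp_apply, proj_apply, hsum, hterms]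
  exact sum_comp_single (L := A) (v := fun i => x i ω)

end ContinuousLinearMap

section L2

variable {E F : Type*} [NormedAddCommGroup E] [InnerProductSpace ℝ E]
  [NormedAddCommGroup F] [InnerProductSpace ℝ F]

theorem MeasureTheory.MemLp.norm_toLp_sq {f : Ω → E} (hf : MemLp f 2 μ) :
    ‖hf.toLp f‖ ^ 2 = ∫ ω, ‖f ω‖ ^ 2 ∂μ := by
  rw [← real_inner_self_eq_norm_sq, L2.inner_def]
  refine integral_congr_ae ?_
  filter_upwards [hf.coeFn_toLp] with ω hω
  rw [hω, real_inner_self_eq_norm_sq]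

theorem tendsto_toLp_of_tendsto_integral_norm_sub_sq {α : Type*} {l : Filter α} {f : Ω → E}
    {g : α → Ω → E} (hf : MemLp f 2 μ) (hg : ∀ N, MemLp (g N) 2 μ)
    (h : Tendsto (fun N => ∫ ω, ‖f ω - g N ω‖ ^ 2 ∂μ) l (𝓝 0)) :
    Tendsto (fun N => (hg N).toLp (g N)) l (𝓝 (hf.toLp f)) := by
  have hnorm : ∀ N, ‖(hg N).toLp (g N) - hf.toLp f‖ =
      Real.sqrt (∫ ω, ‖f ω - g N ω‖ ^ 2 ∂μ) := fun N => by
    rw [norm_sub_rev, ← MemLp.toLp_sub, ← Real.sqrt_sq (norm_nonneg _),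
      (hf.sub (hg N)).norm_toLp_sq]
    rfl
  rw [tendsto_iff_norm_sub_tendsto_zero]
  simpa [hnorm, Function.comp_def] using (Real.continuous_sqrt.tendsto 0).comp h

variable {ι : Type*} [Fintype ι] [DecidableEq ι]

theorem inner_piCompLpL_toLp (A B : (ι → E) →L[ℝ] F) {f : ι → Ω → E}
    (hf : ∀ i, MemLp (f i) 2 μ) :
    ⟪A.piCompLpL 2 μ (fun i => (hf i).toLp (f i)), B.piCompLpL 2 μ (fun i => (hf i).toLp (f i))⟫
      = ∫ ω, ⟪A (fun i => f i ω), B (fun i => f i ω)⟫ ∂μ := by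
  rw [L2.inner_def]
  refine integral_congr_ae ?_
  filter_upwards [A.coeFn_piCompLpL (fun i => (hf i).toLp (f i)),
    B.coeFn_piCompLpL (fun i => (hf i).toLp (f i)),
    eventually_all.2 fun i => (hf i).coeFn_toLp] with ω hA hB hf
  simp only [hA, hB, hf]

theorem tendsto_integral_inner_apply_of_tendsto_integral_norm_sub_sq {α : Type*} {l : Filter α}
    (A B : (ι → E) →L[ℝ] F) {f : ι → Ω → E} {g : α → ι → Ω → E}
    (hf : ∀ i, MemLp (f i) 2 μ) (hg : ∀ N i, MemLp (g N i) 2 μ)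
    (h : ∀ i, Tendsto (fun N => ∫ ω, ‖f i ω - g N i ω‖ ^ 2 ∂μ) l (𝓝 0)) :
    Tendsto (fun N => ∫ ω, ⟪A (fun i => g N i ω), B (fun i => g N i ω)⟫ ∂μ) l
      (𝓝 (∫ ω, ⟪A (fun i => f i ω), B (fun i => f i ω)⟫ ∂μ)) := by
  rw [← inner_piCompLpL_toLp A B hf]
  refine (tendsto_congr fun N => inner_piCompLpL_toLp A B (hg N)).1 ?_
  have hconv : Tendsto (fun N i => (hg N i).toLp (g N i)) l (𝓝 fun i => (hf i).toLp (f i)) :=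
    tendsto_pi_nhds.2 fun i => tendsto_toLp_of_tendsto_integral_norm_sub_sq _ _ (h i)
  exact (((A.piCompLpL 2 μ).continuous.tendsto _).comp hconv).inner
    (((B.piCompLpL 2 μ).continuous.tendsto _).comp hconv)

end L2

section Orthonormal

variable {E : Type*} [NormedAddCommGroup E] [InnerProductSpace ℝ E]

theorem integral_inner_sum_smul_of_orthonormal {ι : Type*} [DecidableEq ι] (s : Finset ι)
    {f : ι → Ω → ℝ} (hf : ∀ a, MemLp (f a) 2 μ)
    (horth : ∀ a b, ∫ ω, f a ω * f b ω ∂μ = if a = b then 1 else 0) (v w : ι → E) :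
    ∫ ω, ⟪∑ a ∈ s, f a ω • v a, ∑ b ∈ s, f b ω • w b⟫ ∂μ = ∑ a ∈ s, ⟪v a, w a⟫ := by
  have hexpand : ∀ ω, ⟪∑ a ∈ s, f a ω • v a, ∑ b ∈ s, f b ω • w b⟫ =
      ∑ a ∈ s, ∑ b ∈ s, f a ω * f b ω * ⟪v a, w b⟫ := fun ω => by
    simp only [sum_inner, inner_sum, real_inner_smul_left, real_inner_smul_right]
    rw [Finset.sum_comm]
    exact Finset.sum_congr rfl fun a _ => Finset.sum_congr rfl fun b _ => by ring
  have hint : ∀ a b, Integrable (fun ω => f a ω * f b ω * ⟪v a, w b⟫) μ := fun a b =>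
    ((hf a).integrable_mul (hf b)).mul_const _
  calc ∫ ω, ⟪∑ a ∈ s, f a ω • v a, ∑ b ∈ s, f b ω • w b⟫ ∂μ
      = ∑ a ∈ s, ∑ b ∈ s, (∫ ω, f a ω * f b ω ∂μ) * ⟪v a, w b⟫ := by
        simp only [hexpand]
        rw [integral_finsetSum _ fun a _ => integrable_finsetSum _ fun b _ => hint a b]
        refine Finset.sum_congr rfl fun a _ => ?_
        rw [integral_finsetSum _ fun b _ => hint a b]
        simp only [integral_mul_const]
    _ = ∑ a ∈ s, ⟪v a, w a⟫ := by simp [horth]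

end Orthonormal

theorem Pi.sum_product_single {ι κ M : Type*} [Fintype ι] [DecidableEq ι] [AddCommMonoid M]
    (s : Finset κ) (g : ι → κ → M) :
    (fun i => ∑ k ∈ s, g i k) = ∑ p ∈ Finset.univ ×ˢ s, Pi.single p.1 (g p.1 p.2) := by
  ext i
  simp [Finset.sum_apply, Finset.sum_product, Pi.single_apply]

section Expansion

variable {ι κ E : Type*} [Fintype ι] [DecidableEq ι] [NormedAddCommGroup E] [InnerProductSpace ℝ E]

theorem sum_inner_apply_single_smul (D : (ι → E) →L[ℝ] E) (m : ι → ℝ) (h : E) :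
    ∑ i, ⟪D (Pi.single i h), m i • h⟫ = ⟪D (fun i => m i • h), h⟫ := by
  have hsingle : (fun i => m i • h) = ∑ i, m i • Pi.single i h := by
    simpa only [Pi.single_smul'] using (Finset.univ_sum_single fun i => m i • h).symm
  simp only [hsingle, map_sum, map_smul, sum_inner, real_inner_smul_left, real_inner_smul_right]

theorem integral_inner_apply_sum_smul_eq_zero [DecidableEq κ] (s : Finset κ)
    {f : ι → κ → Ω → ℝ} (hf : ∀ i k, MemLp (f i k) 2 μ)
    (horth : ∀ i j k l, ∫ ω, f i k ω * f j l ω ∂μ = if i = j ∧ k = l then 1 else 0)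
    (c : κ → ℝ) (ψ : κ → E) (m : ι → ℝ) (D : (ι → E) →L[ℝ] E)
    (hD : ∀ h, D (fun i => m i • h) = 0) :
    ∫ ω, ⟪D (fun i => ∑ k ∈ s, (c k * f i k ω) • ψ k),
      ∑ i, m i • ∑ k ∈ s, (c k * f i k ω) • ψ k⟫ ∂μ = 0 := by
  have hDexp : ∀ ω, D (fun i => ∑ k ∈ s, (c k * f i k ω) • ψ k) =
      ∑ p ∈ Finset.univ ×ˢ s, f p.1 p.2 ω • D (Pi.single p.1 (c p.2 • ψ p.2)) := fun ω => by
    rw [Pi.sum_product_single, map_sum]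
    refine Finset.sum_congr rfl fun p _ => ?_
    rw [mul_comm, ← smul_smul, Pi.single_smul', map_smul]
  have hmexp : ∀ ω, ∑ i, m i • ∑ k ∈ s, (c k * f i k ω) • ψ k =
      ∑ p ∈ Finset.univ ×ˢ s, f p.1 p.2 ω • m p.1 • c p.2 • ψ p.2 := fun ω => by
    rw [Finset.sum_product]
    refine Finset.sum_congr rfl fun i _ => ?_
    rw [Finset.smul_sum]
    refine Finset.sum_congr rfl fun k _ => ?_
    simp only [smul_smul]
    congr 1
    ring
  simp only [hDexp, hmexp]
  rw [integral_inner_sum_smul_of_orthonormal (Finset.univ ×ˢ s) (f := fun p => f p.1 p.2)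
    (fun p => hf p.1 p.2) (fun p q => by simp only [horth, Prod.ext_iff])
    (fun p => D (Pi.single p.1 (c p.2 • ψ p.2))) (fun p => m p.1 • c p.2 • ψ p.2),
    Finset.sum_product_right]
  refine Finset.sum_eq_zero fun k _ => ?_
  rw [sum_inner_apply_single_smul D m (c k • ψ k), hD, inner_zero_left]

end Expansion

end Development

theorem gauss_markov_orthogonality_general
    {H : Type*} [NormedAddCommGroup H] [InnerProductSpace ℝ H]
    {Ω : Type*} [MeasurableSpace Ω] (μ : Measure Ω)
    (n : ℕ)
    (lam : ℕ → ℝ)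
    (ψ : ℕ → H)
    (ek : Fin n → ℕ → Ω → ℝ)
    (hekmem : ∀ i k, MemLp (ek i k) 2 μ)
    (hcross : ∀ i₁ i₂ : Fin n, ∀ k₁ k₂ : ℕ,
      (∫ ω, ek i₁ k₁ ω * ek i₂ k₂ ω ∂μ) = if i₁ = i₂ ∧ k₁ = k₂ then 1 else 0)
    (e : Fin n → Ω → H)
    (hemem : ∀ i, MemLp (e i) 2 μ)
    (heL2 : ∀ i, Tendsto (fun N => ∫ ω,
        ‖e i ω - ∑ k ∈ Finset.range N, (Real.sqrt (lam k) * ek i k ω) • ψ k‖ ^ 2 ∂μ)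
      atTop (nhds 0))
    (m : Fin n → ℝ)
    (Dop : (Fin n → H) →L[ℝ] H)
    (hD : ∀ h : H, Dop (fun i => m i • h) = 0) :
    (∫ ω, ⟪Dop (fun i => e i ω), ∑ i, m i • e i ω⟫ ∂μ) = 0 := by
  let S N i ω := ∑ k ∈ Finset.range N, (Real.sqrt (lam k) * ek i k ω) • ψ k
  have hSmem : ∀ N i, MemLp (S N i) 2 μ := fun N i =>
    memLp_finsetSum _ fun k _ => (memLp_top_const (ψ k)).smul ((hekmem i k).const_mul _)
  let L : (Fin n → H) →L[ℝ] H := ∑ i, m i • ContinuousLinearMap.proj i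
  have hL : ∀ x, L x = ∑ i, m i • x i := fun x => by simp [L]
  have hlim := tendsto_integral_inner_apply_of_tendsto_integral_norm_sub_sq Dop L hemem hSmem heL2
  simp only [hL, S, integral_inner_apply_sum_smul_eq_zero _ hekmem hcross _ ψ m Dop hD] at hlim
  exact tendsto_nhds_unique hlim tendsto_const_nhds

/-- core orthogonality in the proof of the functional Gauss–Markov
theorem.  Let `H` be a Hilbert space and `e₁, …, e_n` zero-mean `H`-valued random
elements expressed as `eᵢ = ∑_k √λ_k e_{i,k} ψ_k` (convergence of the partial sums in
`L²(Ω; H)`), with `∑_k λ_k < ∞`, `∑_k λ_k ‖ψ_k‖² < ∞` and cross-moment structure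
`E(e_{i₁,k₁} e_{i₂,k₂}) = δ_{i₁}^{i₂} δ_{k₁}^{k₂}`.  Let `m ∈ ℝⁿ` and `D : Hⁿ → H` a
bounded linear operator vanishing on every vector of the form `(m₁h, …, m_nh)`.
Then `D(e₁,…,e_n)` and `∑ᵢ mᵢ eᵢ` are orthogonal in `L²(Ω; H)`:
`E⟨D(e₁,…,e_n), ∑ᵢ mᵢ eᵢ⟩_H = 0`. -/
theorem gauss_markov_orthogonality
    {H : Type*} [NormedAddCommGroup H] [InnerProductSpace ℝ H] [CompleteSpace H]
    {Ω : Type*} [MeasurableSpace Ω] (μ : Measure Ω) [IsProbabilityMeasure μ]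
    (n : ℕ)
    (lam : ℕ → ℝ) (hpos : ∀ k, 0 < lam k) (hsum : Summable lam)
    (ψ : ℕ → H) (hψsum : Summable fun k => lam k * ‖ψ k‖ ^ 2)
    (ek : Fin n → ℕ → Ω → ℝ)
    (hekmem : ∀ i k, MemLp (ek i k) 2 μ)
    (hcross : ∀ i₁ i₂ : Fin n, ∀ k₁ k₂ : ℕ,
      (∫ ω, ek i₁ k₁ ω * ek i₂ k₂ ω ∂μ) = if i₁ = i₂ ∧ k₁ = k₂ then 1 else 0)
    (e : Fin n → Ω → H)
    (hemem : ∀ i, MemLp (e i) 2 μ)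
    (hmean : ∀ i, ∫ ω, e i ω ∂μ = 0)
    (heL2 : ∀ i, Tendsto (fun N => ∫ ω,
        ‖e i ω - ∑ k ∈ Finset.range N, (Real.sqrt (lam k) * ek i k ω) • ψ k‖ ^ 2 ∂μ)
      atTop (nhds 0))
    (m : Fin n → ℝ)
    (Dop : (Fin n → H) →L[ℝ] H)
    (hD : ∀ h : H, Dop (fun i => m i • h) = 0) :
    (∫ ω, ⟪Dop (fun i => e i ω), ∑ i, m i • e i ω⟫ ∂μ) = 0 :=
  gauss_markov_orthogonality_general μ n lam ψ ek hekmem hcross e hemem heL2 m Dop hD
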